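/- arXiv:2309.13010 — 11 statements merged into one kernel-verified Lean document; each statement's English description precedes it below -/
import Mathlib

section
/- The wall-crossing transformation φ₊₀ pulls back the superpotential of the (+,−) chart to that of the (+,+) chart: W₊₋(φ₊₀(z1,z2)) = W₊₊(z1,z2); explicitly, substituting z2·(1+q·q'·z4+q'·z3·z4+q'·q''·z1·z4) for z2 in W₊₋ yields exactly W₊₊, i.e. φ₊₀*(W₊₋) = W₊₊. -/
/-!
Setup for the SYZ mirror of the blowup `X` of `ℂ² × K_{ℙ¹}` (Theorem 1.1).
`K` is a commutative ring, `z3inv` plays the role of `z3⁻¹`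
(with the hypothesis `z3 * z3inv = 1` expressing invertibility of `z3`).
-/

variable {K : Type*} [CommRing K]

/-- Superpotential of the `(-,-)` chart, as a function of `(z1, z2)`. -/
def Wmm (q z3 z3inv z4 : K) (p : K × K) : K :=
  p.1 + p.2 + (1 + q ^ 2 + q * z3 + q * z3inv) * z4

/-- Superpotential of the `(-,+)` chart. -/
def Wmp (q q' z3 z3inv z4 : K) (p : K × K) : K :=
  p.1 + p.2 * (1 + q * q' * z4 + q' * z3 * z4) + (1 + q ^ 2 + q * z3 + q * z3inv) * z4

/-- Superpotential of the `(+,-)` chart. -/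
def Wpm (q q'' z3 z3inv z4 : K) (p : K × K) : K :=
  p.1 * (1 + q * q'' * z4 + q'' * z3inv * z4) + p.2 + (1 + q ^ 2 + q * z3 + q * z3inv) * z4

/-- Superpotential of the `(+,+)` chart. -/
def Wpp (q q' q'' z3 z3inv z4 : K) (p : K × K) : K :=
  p.1 * (1 + q * q'' * z4 + q'' * z3inv * z4) + p.2 * (1 + q * q' * z4 + q' * z3 * z4)
    + q' * q'' * p.1 * p.2 * z4 + (1 + q ^ 2 + q * z3 + q * z3inv) * z4

/-- Wall-crossing transformation `φ₋₀`. -/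
def phiM0 (q q' z3 z4 : K) (p : K × K) : K × K :=
  (p.1, p.2 * (1 + q * q' * z4 + q' * z3 * z4))

/-- Wall-crossing transformation `φ₊₀`. -/
def phiP0 (q q' q'' z3 z4 : K) (p : K × K) : K × K :=
  (p.1, p.2 * (1 + q * q' * z4 + q' * z3 * z4 + q' * q'' * p.1 * z4))

/-- Wall-crossing transformation `φ₀₋`. -/
def phi0M (q q'' z3inv z4 : K) (p : K × K) : K × K :=
  (p.1 * (1 + q * q'' * z4 + q'' * z3inv * z4), p.2)

/-- Wall-crossing transformation `φ₀₊`. -/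
def phi0P (q q' q'' z3inv z4 : K) (p : K × K) : K × K :=
  (p.1 * (1 + q * q'' * z4 + q'' * z3inv * z4 + q' * q'' * p.2 * z4), p.2)

theorem phiP0_pullback_Wpm_general (z1 z2 z3 z3inv z4 q q' q'' : K) :
    Wpm q q'' z3 z3inv z4 (phiP0 q q' q'' z3 z4 (z1, z2)) = Wpp q q' q'' z3 z3inv z4 (z1, z2) := by
  simp only [Wpm, Wpp, phiP0]
  ring

/-- `φ₊₀* (W₊₋) = W₊₊`. -/
theorem phiP0_pullback_Wpm (z1 z2 z3 z3inv z4 q q' q'' : K) (hz3 : z3 * z3inv = 1) :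
    Wpm q q'' z3 z3inv z4 (phiP0 q q' q'' z3 z4 (z1, z2)) = Wpp q q' q'' z3 z3inv z4 (z1, z2) :=
  phiP0_pullback_Wpm_general z1 z2 z3 z3inv z4 q q' q''
end

section
/- The wall-crossing transformation φ₀₊ pulls back the superpotential of the (−,+) chart to that of the (+,+) chart: W₋₊(φ₀₊(z1,z2)) = W₊₊(z1,z2); explicitly, substituting z1·(1+q·q''·z4+q''·z3⁻¹·z4+q'·q''·z2·z4) for z1 in W₋₊ yields exactly W₊₊, i.e. φ₀₊*(W₋₊) = W₊₊. -/
/-!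
Setup for the SYZ mirror of the blowup `X` of `ℂ² × K_{ℙ¹}` (Theorem 1.1).
`K` is a commutative ring, `z3inv` plays the role of `z3⁻¹`
(with the hypothesis `z3 * z3inv = 1` expressing invertibility of `z3`).
-/

variable {K : Type*} [CommRing K]

theorem phi0P_pullback_Wmp_general (z1 z2 z3 z3inv z4 q q' q'' : K) :
    Wmp q q' z3 z3inv z4 (phi0P q q' q'' z3inv z4 (z1, z2)) = Wpp q q' q'' z3 z3inv z4 (z1, z2) := by
  simp only [Wmp, Wpp, phi0P]; ring

/-- `φ₀₊* (W₋₊) = W₊₊`. -/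
theorem phi0P_pullback_Wmp (z1 z2 z3 z3inv z4 q q' q'' : K) (hz3 : z3 * z3inv = 1) :
    Wmp q q' z3 z3inv z4 (phi0P q q' q'' z3inv z4 (z1, z2)) = Wpp q q' q'' z3 z3inv z4 (z1, z2) :=
  phi0P_pullback_Wmp_general z1 z2 z3 z3inv z4 q q' q''
end

section
/- (Inconsistency of the wall-crossing transformations.) Assume in addition that K is an integral domain and that z1, z2, z4, q', q'' are all nonzero. Then (φ₋₀ ∘ φ₀₊)(z1,z2) ≠ (φ₀₋ ∘ φ₊₀)(z1,z2); in particular the wall-crossing transformations of Theorem 1.1 fail the cocycle condition φ₋₀ ∘ φ₀₊ = φ₀₋ ∘ φ₊₀ around the codimension-2 locus where the walls intersect. -/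
/-!
Setup for the SYZ mirror of the blowup `X` of `ℂ² × K_{ℙ¹}` (Theorem 1.1).
`K` is a commutative ring, `z3inv` plays the role of `z3⁻¹`
(with the hypothesis `z3 * z3inv = 1` expressing invertibility of `z3`).
-/

variable {K : Type*} [CommRing K]

theorem fst_phiM0_phi0P_sub_fst_phi0M_phiP0 (q q' q'' z3 z3inv z4 : K) (p : K × K) :
    (phiM0 q q' z3 z4 (phi0P q q' q'' z3inv z4 p)).1 -
        (phi0M q q'' z3inv z4 (phiP0 q q' q'' z3 z4 p)).1 =
      q' * q'' * p.1 * p.2 * z4 := by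
  simp only [phiM0, phi0P, phi0M, phiP0]
  ring

theorem wallcrossing_inconsistent_general [IsDomain K] (z1 z2 z3 z3inv z4 q q' q'' : K)
    (hz1 : z1 ≠ 0) (hz2 : z2 ≠ 0) (hz4 : z4 ≠ 0)
    (hq' : q' ≠ 0) (hq'' : q'' ≠ 0) :
    phiM0 q q' z3 z4 (phi0P q q' q'' z3inv z4 (z1, z2)) ≠
      phi0M q q'' z3inv z4 (phiP0 q q' q'' z3 z4 (z1, z2)) := by
  intro h
  have hdiff := fst_phiM0_phi0P_sub_fst_phi0M_phiP0 q q' q'' z3 z3inv z4 (z1, z2)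
  rw [h, sub_self] at hdiff
  exact mul_ne_zero (mul_ne_zero (mul_ne_zero (mul_ne_zero hq' hq'') hz1) hz2) hz4 hdiff.symm

/-- inconsistency of the wall-crossing transformations
(`φ₋₀ ∘ φ₀₊ ≠ φ₀₋ ∘ φ₊₀` at `(z1, z2)`) when `K` is an integral domain and
`z1, z2, z4, q', q''` are all nonzero. -/
theorem wallcrossing_inconsistent [IsDomain K] (z1 z2 z3 z3inv z4 q q' q'' : K)
    (hz3 : z3 * z3inv = 1) (hz1 : z1 ≠ 0) (hz2 : z2 ≠ 0) (hz4 : z4 ≠ 0)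
    (hq' : q' ≠ 0) (hq'' : q'' ≠ 0) :
    phiM0 q q' z3 z4 (phi0P q q' q'' z3inv z4 (z1, z2)) ≠
      phi0M q q'' z3inv z4 (phiP0 q q' q'' z3 z4 (z1, z2)) :=
  wallcrossing_inconsistent_general z1 z2 z3 z3inv z4 q q' q'' hz1 hz2 hz4 hq' hq''
end

section
/- The failure of the cocycle condition is measured exactly by the term q'·q''·z1·z2·z4: the componentwise difference of the two compositions of wall-crossing transformations is (φ₀₋ ∘ φ₊₀)(z1,z2) − (φ₋₀ ∘ φ₀₊)(z1,z2) = (−q'·q''·z1·z2·z4, q'·q''·z1·z2·z4). -/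
/-!
Setup for the SYZ mirror of the blowup `X` of `ℂ² × K_{ℙ¹}` (Theorem 1.1).
`K` is a commutative ring, `z3inv` plays the role of `z3⁻¹`
(with the hypothesis `z3 * z3inv = 1` expressing invertibility of `z3`).
-/

variable {K : Type*} [CommRing K]

theorem Prod.mk_mul_add_sub_mk_mul_add {R : Type*} [CommRing R] (x y a c s t : R) :
    (x * c, y * (a + s)) - (x * (c + t), y * a) = (-(x * t), y * s) := by
  ext <;> simp only [Prod.fst_sub, Prod.snd_sub] <;> ring

/-- Both compositions apply the same multipliers; they differ only by the cross terms
`q' * q'' * z2 * z4` and `q' * q'' * z1 * z4` that the `+` walls add. -/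
theorem wallcrossing_discrepancy_general (z1 z2 z3 z3inv z4 q q' q'' : K) :
    phi0M q q'' z3inv z4 (phiP0 q q' q'' z3 z4 (z1, z2)) -
        phiM0 q q' z3 z4 (phi0P q q' q'' z3inv z4 (z1, z2)) =
      (-(q' * q'' * z1 * z2 * z4), q' * q'' * z1 * z2 * z4) := by
  simp only [phi0M, phiP0, phiM0, phi0P]
  rw [Prod.mk_mul_add_sub_mk_mul_add]
  congr 1 <;> ring

/-- the failure of the cocycle condition is exactly measured by
`q' * q'' * z1 * z2 * z4`, componentwise. -/
theorem wallcrossing_discrepancy (z1 z2 z3 z3inv z4 q q' q'' : K) (hz3 : z3 * z3inv = 1) :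
    phi0M q q'' z3inv z4 (phiP0 q q' q'' z3 z4 (z1, z2)) -
        phiM0 q q' z3 z4 (phi0P q q' q'' z3inv z4 (z1, z2)) =
      (-(q' * q'' * z1 * z2 * z4), q' * q'' * z1 * z2 * z4) :=
  wallcrossing_discrepancy_general z1 z2 z3 z3inv z4 q q' q''
end

section
/- (Consistency of the scattering diagram after discarding the q'·q'' terms.) The wall-crossing transformations obtained from φ₊₀ and φ₀₊ by deleting the terms involving q'·q'' coincide with φ₋₀ and φ₀₋ respectively, and these commute: φ₋₀ ∘ φ₀₋ = φ₀₋ ∘ φ₋₀ as maps K² → K², both compositions being (z1,z2) ↦ (z1·(1+q·q''·z4+q''·z3⁻¹·z4), z2·(1+q·q'·z4+q'·z3·z4)). In particular, setting q'·q'' = 0 cures the inconsistency of the wall-crossing transformations of Theorem 1.1. -/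
/-!
Setup for the SYZ mirror of the blowup `X` of `ℂ² × K_{ℙ¹}` (Theorem 1.1).
`K` is a commutative ring, `z3inv` plays the role of `z3⁻¹`
(with the hypothesis `z3 * z3inv = 1` expressing invertibility of `z3`).
-/

variable {K : Type*} [CommRing K]

/-- The transformation obtained from `φ₊₀` by deleting the term involving `q' * q''`. -/
def phiP0tr (q q' z3 z4 : K) (p : K × K) : K × K :=
  (p.1, p.2 * (1 + q * q' * z4 + q' * z3 * z4))

/-- The transformation obtained from `φ₀₊` by deleting the term involving `q' * q''`. -/
def phi0Ptr (q q'' z3inv z4 : K) (p : K × K) : K × K :=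
  (p.1 * (1 + q * q'' * z4 + q'' * z3inv * z4), p.2)

theorem phiM0_phi0M (q q' q'' z3 z3inv z4 : K) (p : K × K) :
    phiM0 q q' z3 z4 (phi0M q q'' z3inv z4 p) =
      (p.1 * (1 + q * q'' * z4 + q'' * z3inv * z4), p.2 * (1 + q * q' * z4 + q' * z3 * z4)) :=
  rfl

theorem phi0M_phiM0 (q q' q'' z3 z3inv z4 : K) (p : K × K) :
    phi0M q q'' z3inv z4 (phiM0 q q' z3 z4 p) =
      (p.1 * (1 + q * q'' * z4 + q'' * z3inv * z4), p.2 * (1 + q * q' * z4 + q' * z3 * z4)) :=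
  rfl

theorem phiM0_comp_phi0M (q q' q'' z3 z3inv z4 : K) :
    phiM0 q q' z3 z4 ∘ phi0M q q'' z3inv z4 = phi0M q q'' z3inv z4 ∘ phiM0 q q' z3 z4 :=
  funext fun p => (phiM0_phi0M q q' q'' z3 z3inv z4 p).trans
    (phi0M_phiM0 q q' q'' z3 z3inv z4 p).symm

theorem truncated_wallcrossing_consistent_general (z3 z3inv z4 q q' q'' : K) :
    phiP0tr q q' z3 z4 = phiM0 q q' z3 z4 ∧
    phi0Ptr q q'' z3inv z4 = phi0M q q'' z3inv z4 ∧
    (phiM0 q q' z3 z4) ∘ (phi0M q q'' z3inv z4) = (phi0M q q'' z3inv z4) ∘ (phiM0 q q' z3 z4) ∧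
    ∀ z1 z2 : K, phiM0 q q' z3 z4 (phi0M q q'' z3inv z4 (z1, z2)) =
      (z1 * (1 + q * q'' * z4 + q'' * z3inv * z4), z2 * (1 + q * q' * z4 + q' * z3 * z4)) :=
  ⟨rfl, rfl, phiM0_comp_phi0M q q' q'' z3 z3inv z4,
    fun z1 z2 => phiM0_phi0M q q' q'' z3 z3inv z4 (z1, z2)⟩

/-- consistency of the scattering diagram after discarding the `q' * q''`
terms: the truncations of `φ₊₀` and `φ₀₊` coincide with `φ₋₀` and `φ₀₋`, these
commute, and both compositions are
`(z1, z2) ↦ (z1 * (1 + q q'' z4 + q'' z3⁻¹ z4), z2 * (1 + q q' z4 + q' z3 z4))`. -/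
theorem truncated_wallcrossing_consistent (z3 z3inv z4 q q' q'' : K) (hz3 : z3 * z3inv = 1) :
    phiP0tr q q' z3 z4 = phiM0 q q' z3 z4 ∧
    phi0Ptr q q'' z3inv z4 = phi0M q q'' z3inv z4 ∧
    (phiM0 q q' z3 z4) ∘ (phi0M q q'' z3inv z4) = (phi0M q q'' z3inv z4) ∘ (phiM0 q q' z3 z4) ∧
    ∀ z1 z2 : K, phiM0 q q' z3 z4 (phi0M q q'' z3inv z4 (z1, z2)) =
      (z1 * (1 + q * q'' * z4 + q'' * z3inv * z4), z2 * (1 + q * q' * z4 + q' * z3 * z4)) :=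
  truncated_wallcrossing_consistent_general z3 z3inv z4 q q' q''
end

section
/- (The truncated Landau-Ginzburg model at q'·q'' = 0 is well defined.) Let W₊₊ᵗʳ := W₊₊ − q'·q''·z1·z2·z4 (the superpotential of the (+,+) chart with the q'·q'' term discarded). Then the truncated wall-crossing transformations φ₋₀ and φ₀₋ glue the superpotentials consistently: W₊₋(φ₋₀(z1,z2)) = W₊₊ᵗʳ(z1,z2) and W₋₊(φ₀₋(z1,z2)) = W₊₊ᵗʳ(z1,z2). -/
/-!
Setup for the SYZ mirror of the blowup `X` of `ℂ² × K_{ℙ¹}` (Theorem 1.1).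
`K` is a commutative ring, `z3inv` plays the role of `z3⁻¹`
(with the hypothesis `z3 * z3inv = 1` expressing invertibility of `z3`).
-/

variable {K : Type*} [CommRing K]

/-- The truncated superpotential of the `(+,+)` chart:
`W₊₊` with the `q' * q''` term discarded. -/
def Wpptr (q q' q'' z3 z3inv z4 : K) (p : K × K) : K :=
  Wpp q q' q'' z3 z3inv z4 p - q' * q'' * p.1 * p.2 * z4

theorem Wpm_phiM0 (q q' q'' z3 z3inv z4 : K) (p : K × K) :
    Wpm q q'' z3 z3inv z4 (phiM0 q q' z3 z4 p) = Wpptr q q' q'' z3 z3inv z4 p := by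
  simp only [Wpm, Wpptr, Wpp, phiM0]
  ring

theorem Wmp_phi0M (q q' q'' z3 z3inv z4 : K) (p : K × K) :
    Wmp q q' z3 z3inv z4 (phi0M q q'' z3inv z4 p) = Wpptr q q' q'' z3 z3inv z4 p := by
  simp only [Wmp, Wpptr, Wpp, phi0M]
  ring

theorem truncated_LG_well_defined_general (z1 z2 z3 z3inv z4 q q' q'' : K) :
    Wpm q q'' z3 z3inv z4 (phiM0 q q' z3 z4 (z1, z2)) = Wpptr q q' q'' z3 z3inv z4 (z1, z2) ∧
    Wmp q q' z3 z3inv z4 (phi0M q q'' z3inv z4 (z1, z2)) = Wpptr q q' q'' z3 z3inv z4 (z1, z2) :=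
  ⟨Wpm_phiM0 q q' q'' z3 z3inv z4 (z1, z2), Wmp_phi0M q q' q'' z3 z3inv z4 (z1, z2)⟩

/-- the truncated Landau-Ginzburg model at `q' * q'' = 0` is well defined:
the truncated wall-crossing transformations `φ₋₀` and `φ₀₋` glue the superpotentials
consistently onto `W₊₊ᵗʳ`. -/
theorem truncated_LG_well_defined (z1 z2 z3 z3inv z4 q q' q'' : K) (hz3 : z3 * z3inv = 1) :
    Wpm q q'' z3 z3inv z4 (phiM0 q q' z3 z4 (z1, z2)) = Wpptr q q' q'' z3 z3inv z4 (z1, z2) ∧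
    Wmp q q' z3 z3inv z4 (phi0M q q'' z3inv z4 (z1, z2)) = Wpptr q q' q'' z3 z3inv z4 (z1, z2) :=
  truncated_LG_well_defined_general z1 z2 z3 z3inv z4 q q' q''
end

section
/- (The superpotential is well defined despite the inconsistency.) Although the two compositions of wall-crossing transformations differ, they pull back the superpotential of the (−,−) chart to the same function: W₋₋((φ₋₀ ∘ φ₀₊)(z1,z2)) = W₊₊(z1,z2) and W₋₋((φ₀₋ ∘ φ₊₀)(z1,z2)) = W₊₊(z1,z2). -/
/-!
`z3inv` plays the role of `z3⁻¹`; the names `Wmm`, `Wmp`, `Wpm`, `Wpp` stand for `W₋₋`, `W₋₊`,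
`W₊₋`, `W₊₊`, and `phiM0`, `phiP0`, `phi0M`, `phi0P` for `φ₋₀`, `φ₊₀`, `φ₀₋`, `φ₀₊`.

Each wall-crossing map pulls back the superpotential of the chart on one side of its wall to that
of the chart on the other side: `φ₋₀` takes `W₋₋` to `W₋₊` and `φ₀₊` takes `W₋₊` to `W₊₊`, while
`φ₀₋` takes `W₋₋` to `W₊₋` and `φ₊₀` takes `W₊₋` to `W₊₊`. The term `q' q'' z1 z2 z4` of `W₊₊` is
produced on both paths by the extra `z2`- resp. `z1`-dependent term of the second wall-crossing,
so the two compositions agree on `W₋₋` although they differ as maps.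
-/

variable {K : Type*} [CommRing K]

section WallCrossing

variable (q q' q'' z3 z3inv z4 : K) (p : K × K)

theorem Wmm_phiM0 : Wmm q z3 z3inv z4 (phiM0 q q' z3 z4 p) = Wmp q q' z3 z3inv z4 p := by
  simp only [Wmm, Wmp, phiM0]

theorem Wmp_phi0P :
    Wmp q q' z3 z3inv z4 (phi0P q q' q'' z3inv z4 p) = Wpp q q' q'' z3 z3inv z4 p := by
  simp only [Wmp, Wpp, phi0P]
  ring

theorem Wmm_phi0M : Wmm q z3 z3inv z4 (phi0M q q'' z3inv z4 p) = Wpm q q'' z3 z3inv z4 p := by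
  simp only [Wmm, Wpm, phi0M]

theorem Wpm_phiP0 :
    Wpm q q'' z3 z3inv z4 (phiP0 q q' q'' z3 z4 p) = Wpp q q' q'' z3 z3inv z4 p := by
  simp only [Wpm, Wpp, phiP0]
  ring

end WallCrossing

theorem superpotential_well_defined_general (z1 z2 z3 z3inv z4 q q' q'' : K) :
    Wmm q z3 z3inv z4 (phiM0 q q' z3 z4 (phi0P q q' q'' z3inv z4 (z1, z2))) =
      Wpp q q' q'' z3 z3inv z4 (z1, z2) ∧
    Wmm q z3 z3inv z4 (phi0M q q'' z3inv z4 (phiP0 q q' q'' z3 z4 (z1, z2))) =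
      Wpp q q' q'' z3 z3inv z4 (z1, z2) := by
  rw [Wmm_phiM0, Wmp_phi0P, Wmm_phi0M, Wpm_phiP0]
  exact ⟨rfl, rfl⟩

/-- although the two compositions of wall-crossing transformations differ,
both pull back `W₋₋` to `W₊₊`. -/
theorem superpotential_well_defined (z1 z2 z3 z3inv z4 q q' q'' : K) (hz3 : z3 * z3inv = 1) :
    Wmm q z3 z3inv z4 (phiM0 q q' z3 z4 (phi0P q q' q'' z3inv z4 (z1, z2))) =
      Wpp q q' q'' z3 z3inv z4 (z1, z2) ∧
    Wmm q z3 z3inv z4 (phi0M q q'' z3inv z4 (phiP0 q q' q'' z3 z4 (z1, z2))) =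
      Wpp q q' q'' z3 z3inv z4 (z1, z2) :=
  superpotential_well_defined_general z1 z2 z3 z3inv z4 q q' q''
end

section
/- The compactified wall-crossing transformation φ̄₋₀ pulls back the superpotential of the (−,−) chart to that of the (−,+) chart: setting C := 1 + q·q'·z4 + q'·z3·z4 + q1·q'·q''·z1⁻¹·z4 and assuming C ≠ 0, the substitution z2 ↦ z2·C in W̄₋₋ yields W̄₋₊, i.e. W̄₋₋(z1, z2·C, z3, z4) = W̄₋₊(z1, z2, z3, z4). -/
/-!
Setup for the SYZ mirror of the compactified example: the blowup `X̄` of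
`ℙ¹ × ℙ¹ × 𝔽₂` (Proposition of §2.7).  `K` is a field; the superpotentials
`W̄` of the four charts are functions of `(z1, z2)` with parameters
`q, q', q'', q1, q2, q4, z3, z4`.
-/

variable {K : Type*} [Field K]

/-- Superpotential of the `(-,-)` chart of the compactified mirror. -/
def Wbarmm (q q' q'' q1 q2 q4 z3 z4 z1 z2 : K) : K :=
  z1 + q1 * z1⁻¹ * (1 + q * q'' * z4 + q'' * z3⁻¹ * z4) + z2
    + q2 * z2⁻¹ * (1 + q * q' * z4 + q' * z3 * z4)
    + q1 * q2 * q' * q'' * z1⁻¹ * z2⁻¹ * z4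
    + (1 + q ^ 2 + q * z3 + q * z3⁻¹) * z4 + q4 * z4⁻¹

/-- Superpotential of the `(-,+)` chart of the compactified mirror. -/
def Wbarmp (q q' q'' q1 q2 q4 z3 z4 z1 z2 : K) : K :=
  z1 + q1 * z1⁻¹ * (1 + q * q'' * z4 + q'' * z3⁻¹ * z4)
    + z2 * (1 + q * q' * z4 + q' * z3 * z4) + q2 * z2⁻¹
    + q1 * q' * q'' * z1⁻¹ * z2 * z4
    + (1 + q ^ 2 + q * z3 + q * z3⁻¹) * z4 + q4 * z4⁻¹

/-- Superpotential of the `(+,-)` chart of the compactified mirror. -/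
def Wbarpm (q q' q'' q1 q2 q4 z3 z4 z1 z2 : K) : K :=
  z1 * (1 + q * q'' * z4 + q'' * z3⁻¹ * z4) + q1 * z1⁻¹ + z2
    + q2 * z2⁻¹ * (1 + q * q' * z4 + q' * z3 * z4)
    + q2 * q' * q'' * z1 * z2⁻¹ * z4
    + (1 + q ^ 2 + q * z3 + q * z3⁻¹) * z4 + q4 * z4⁻¹

/-- Superpotential of the `(+,+)` chart of the compactified mirror. -/
def Wbarpp (q q' q'' q1 q2 q4 z3 z4 z1 z2 : K) : K :=
  z1 * (1 + q * q'' * z4 + q'' * z3⁻¹ * z4) + q1 * z1⁻¹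
    + z2 * (1 + q * q' * z4 + q' * z3 * z4) + q2 * z2⁻¹
    + q' * q'' * z1 * z2 * z4
    + (1 + q ^ 2 + q * z3 + q * z3⁻¹) * z4 + q4 * z4⁻¹

theorem mul_inv_mul_mul_cancel_right₀ {C : K} (c x : K) (hC : C ≠ 0) :
    c * (x * C)⁻¹ * C = c * x⁻¹ := by
  rw [mul_inv, ← mul_assoc, inv_mul_cancel_right₀ hC]

theorem phibarM0_pullback_general (q q' q'' q1 q2 q4 z1 z2 z3 z4 : K)
    (hC : 1 + q * q' * z4 + q' * z3 * z4 + q1 * q' * q'' * z1⁻¹ * z4 ≠ 0) :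
    Wbarmm q q' q'' q1 q2 q4 z3 z4 z1
        (z2 * (1 + q * q' * z4 + q' * z3 * z4 + q1 * q' * q'' * z1⁻¹ * z4)) =
      Wbarmp q q' q'' q1 q2 q4 z3 z4 z1 z2 := by
  unfold Wbarmm Wbarmp
  -- the two `z2⁻¹`-terms of `W̄₋₋` add up to `q2 * (z2 * C)⁻¹ * C`
  linear_combination mul_inv_mul_mul_cancel_right₀ q2 z2 hC

/-- the compactified wall-crossing transformation `φ̄₋₀`
(substituting `z2 ↦ z2 * C` with `C = 1 + q q' z4 + q' z3 z4 + q1 q' q'' z1⁻¹ z4`)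
pulls back `W̄₋₋` to `W̄₋₊`. -/
theorem phibarM0_pullback (q q' q'' q1 q2 q4 z1 z2 z3 z4 : K) (hq : q ≠ 0) (hq' : q' ≠ 0) (hq'' : q'' ≠ 0)
    (hq1 : q1 ≠ 0) (hq2 : q2 ≠ 0) (hq4 : q4 ≠ 0)
    (hz1 : z1 ≠ 0) (hz2 : z2 ≠ 0) (hz3 : z3 ≠ 0) (hz4 : z4 ≠ 0)
    (hC : 1 + q * q' * z4 + q' * z3 * z4 + q1 * q' * q'' * z1⁻¹ * z4 ≠ 0) :
    Wbarmm q q' q'' q1 q2 q4 z3 z4 z1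
        (z2 * (1 + q * q' * z4 + q' * z3 * z4 + q1 * q' * q'' * z1⁻¹ * z4)) =
      Wbarmp q q' q'' q1 q2 q4 z3 z4 z1 z2 :=
  phibarM0_pullback_general q q' q'' q1 q2 q4 z1 z2 z3 z4 hC
end

section
/- The compactified wall-crossing transformation φ̄₊₀ pulls back the superpotential of the (+,−) chart to that of the (+,+) chart: setting C' := 1 + q·q'·z4 + q'·z3·z4 + q'·q''·z1·z4 and assuming C' ≠ 0, the substitution z2 ↦ z2·C' in W̄₊₋ yields W̄₊₊, i.e. W̄₊₋(z1, z2·C', z3, z4) = W̄₊₊(z1, z2, z3, z4). -/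
/-!
Setup for the SYZ mirror of the compactified example: the blowup `X̄` of
`ℙ¹ × ℙ¹ × 𝔽₂` (Proposition of §2.7).  `K` is a field; the superpotentials
`W̄` of the four charts are functions of `(z1, z2)` with parameters
`q, q', q'', q1, q2, q4, z3, z4`.
-/

variable {K : Type*} [Field K]

-- Both `z2⁻¹` terms of `W̄₊₋` acquire the factor `C'⁻¹`; their coefficients add up to `C'`,
-- while `z2 * C'` produces the extra term `q' q'' z1 z2 z4` of `W̄₊₊`.
theorem phibarP0_pullback_general (q q' q'' q1 q2 q4 z1 z2 z3 z4 : K)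
    (hC' : 1 + q * q' * z4 + q' * z3 * z4 + q' * q'' * z1 * z4 ≠ 0) :
    Wbarpm q q' q'' q1 q2 q4 z3 z4 z1
        (z2 * (1 + q * q' * z4 + q' * z3 * z4 + q' * q'' * z1 * z4)) =
      Wbarpp q q' q'' q1 q2 q4 z3 z4 z1 z2 := by
  unfold Wbarpm Wbarpp
  rw [mul_inv]
  linear_combination (q2 * z2⁻¹) * inv_mul_cancel₀ hC'

/-- the compactified wall-crossing transformation `φ̄₊₀`
(substituting `z2 ↦ z2 * C'` with `C' = 1 + q q' z4 + q' z3 z4 + q' q'' z1 z4`)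
pulls back `W̄₊₋` to `W̄₊₊`. -/
theorem phibarP0_pullback (q q' q'' q1 q2 q4 z1 z2 z3 z4 : K) (hq : q ≠ 0) (hq' : q' ≠ 0) (hq'' : q'' ≠ 0)
    (hq1 : q1 ≠ 0) (hq2 : q2 ≠ 0) (hq4 : q4 ≠ 0)
    (hz1 : z1 ≠ 0) (hz2 : z2 ≠ 0) (hz3 : z3 ≠ 0) (hz4 : z4 ≠ 0)
    (hC' : 1 + q * q' * z4 + q' * z3 * z4 + q' * q'' * z1 * z4 ≠ 0) :
    Wbarpm q q' q'' q1 q2 q4 z3 z4 z1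
        (z2 * (1 + q * q' * z4 + q' * z3 * z4 + q' * q'' * z1 * z4)) =
      Wbarpp q q' q'' q1 q2 q4 z3 z4 z1 z2 :=
  phibarP0_pullback_general q q' q'' q1 q2 q4 z1 z2 z3 z4 hC'
end

section
/- The compactified wall-crossing transformation φ̄₀₋ pulls back the superpotential of the (−,−) chart to that of the (+,−) chart: setting D := 1 + q·q''·z4 + q''·z3⁻¹·z4 + q2·q'·q''·z2⁻¹·z4 and assuming D ≠ 0, the substitution z1 ↦ z1·D in W̄₋₋ yields W̄₊₋, i.e. W̄₋₋(z1·D, z2, z3, z4) = W̄₊₋(z1, z2, z3, z4). -/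
/-!
Both superpotentials split as a part in `z1` plus a common `z1`-free part `T`:
`W̄₋₋ = z1 + q1 z1⁻¹ D + T` and `W̄₊₋ = z1 D + q1 z1⁻¹ + T`, where `D` is the wall-crossing
factor (the `z2⁻¹`-term of `D` in `W̄₋₋` is the mixed term `q1 q2 q' q'' z1⁻¹ z2⁻¹ z4`).
Substituting `z1 ↦ z1 D` turns `z1` into `z1 D` and `q1 z1⁻¹ D` into `q1 z1⁻¹`.
-/

variable {K : Type*} [Field K]

def phibar0MFactor (q q' q'' q2 z2 z3 z4 : K) : K :=
  1 + q * q'' * z4 + q'' * z3⁻¹ * z4 + q2 * q' * q'' * z2⁻¹ * z4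

def WbarmZ1Free (q q' q2 q4 z2 z3 z4 : K) : K :=
  z2 + q2 * z2⁻¹ * (1 + q * q' * z4 + q' * z3 * z4)
    + (1 + q ^ 2 + q * z3 + q * z3⁻¹) * z4 + q4 * z4⁻¹

theorem Wbarmm_eq (q q' q'' q1 q2 q4 z3 z4 z1 z2 : K) :
    Wbarmm q q' q'' q1 q2 q4 z3 z4 z1 z2 =
      z1 + q1 * z1⁻¹ * phibar0MFactor q q' q'' q2 z2 z3 z4 + WbarmZ1Free q q' q2 q4 z2 z3 z4 := by
  unfold Wbarmm phibar0MFactor WbarmZ1Free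
  ring

theorem Wbarpm_eq (q q' q'' q1 q2 q4 z3 z4 z1 z2 : K) :
    Wbarpm q q' q'' q1 q2 q4 z3 z4 z1 z2 =
      z1 * phibar0MFactor q q' q'' q2 z2 z3 z4 + q1 * z1⁻¹ + WbarmZ1Free q q' q2 q4 z2 z3 z4 := by
  unfold Wbarpm phibar0MFactor WbarmZ1Free
  ring

theorem phibar0M_pullback_general (q q' q'' q1 q2 q4 z1 z2 z3 z4 : K)
    (hD : 1 + q * q'' * z4 + q'' * z3⁻¹ * z4 + q2 * q' * q'' * z2⁻¹ * z4 ≠ 0) :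
    Wbarmm q q' q'' q1 q2 q4 z3 z4
        (z1 * (1 + q * q'' * z4 + q'' * z3⁻¹ * z4 + q2 * q' * q'' * z2⁻¹ * z4)) z2 =
      Wbarpm q q' q'' q1 q2 q4 z3 z4 z1 z2 := by
  change phibar0MFactor q q' q'' q2 z2 z3 z4 ≠ 0 at hD
  change Wbarmm q q' q'' q1 q2 q4 z3 z4 (z1 * phibar0MFactor q q' q'' q2 z2 z3 z4) z2 = _
  rw [Wbarmm_eq, Wbarpm_eq, mul_inv, ← mul_assoc, inv_mul_cancel_right₀ hD]

/-- the compactified wall-crossing transformation `φ̄₀₋`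
(substituting `z1 ↦ z1 * D` with `D = 1 + q q'' z4 + q'' z3⁻¹ z4 + q2 q' q'' z2⁻¹ z4`)
pulls back `W̄₋₋` to `W̄₊₋`. -/
theorem phibar0M_pullback (q q' q'' q1 q2 q4 z1 z2 z3 z4 : K) (hq : q ≠ 0) (hq' : q' ≠ 0) (hq'' : q'' ≠ 0)
    (hq1 : q1 ≠ 0) (hq2 : q2 ≠ 0) (hq4 : q4 ≠ 0)
    (hz1 : z1 ≠ 0) (hz2 : z2 ≠ 0) (hz3 : z3 ≠ 0) (hz4 : z4 ≠ 0)
    (hD : 1 + q * q'' * z4 + q'' * z3⁻¹ * z4 + q2 * q' * q'' * z2⁻¹ * z4 ≠ 0) :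
    Wbarmm q q' q'' q1 q2 q4 z3 z4
        (z1 * (1 + q * q'' * z4 + q'' * z3⁻¹ * z4 + q2 * q' * q'' * z2⁻¹ * z4)) z2 =
      Wbarpm q q' q'' q1 q2 q4 z3 z4 z1 z2 :=
  phibar0M_pullback_general q q' q'' q1 q2 q4 z1 z2 z3 z4 hD
end

section
/- The compactified wall-crossing transformation φ̄₀₊ pulls back the superpotential of the (−,+) chart to that of the (+,+) chart: setting D' := 1 + q·q''·z4 + q''·z3⁻¹·z4 + q'·q''·z2·z4 and assuming D' ≠ 0, the substitution z1 ↦ z1·D' in W̄₋₊ yields W̄₊₊, i.e. W̄₋₊(z1·D', z2, z3, z4) = W̄₊₊(z1, z2, z3, z4). -/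
/-!
Setup for the SYZ mirror of the compactified example: the blowup `X̄` of
`ℙ¹ × ℙ¹ × 𝔽₂` (Proposition of §2.7).  `K` is a field; the superpotentials
`W̄` of the four charts are functions of `(z1, z2)` with parameters
`q, q', q'', q1, q2, q4, z3, z4`.
-/

variable {K : Type*} [Field K]

/-- The factor `D'` of the wall-crossing map `φ̄₀₊ : z1 ↦ z1 * D'`. -/
def wallFactor (q q' q'' z2 z3 z4 : K) : K :=
  1 + q * q'' * z4 + q'' * z3⁻¹ * z4 + q' * q'' * z2 * z4

def WbarRest (q q' q2 q4 z3 z4 z2 : K) : K :=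
  z2 * (1 + q * q' * z4 + q' * z3 * z4) + q2 * z2⁻¹
    + (1 + q ^ 2 + q * z3 + q * z3⁻¹) * z4 + q4 * z4⁻¹

theorem Wbarmp_eq (q q' q'' q1 q2 q4 z3 z4 z1 z2 : K) :
    Wbarmp q q' q'' q1 q2 q4 z3 z4 z1 z2 =
      z1 + q1 * z1⁻¹ * wallFactor q q' q'' z2 z3 z4 + WbarRest q q' q2 q4 z3 z4 z2 := by
  unfold Wbarmp wallFactor WbarRest
  ring

theorem Wbarpp_eq (q q' q'' q1 q2 q4 z3 z4 z1 z2 : K) :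
    Wbarpp q q' q'' q1 q2 q4 z3 z4 z1 z2 =
      z1 * wallFactor q q' q'' z2 z3 z4 + q1 * z1⁻¹ + WbarRest q q' q2 q4 z3 z4 z2 := by
  unfold Wbarpp wallFactor WbarRest
  ring

theorem phibar0P_pullback_general (q q' q'' q1 q2 q4 z1 z2 z3 z4 : K)
    (hD' : 1 + q * q'' * z4 + q'' * z3⁻¹ * z4 + q' * q'' * z2 * z4 ≠ 0) :
    Wbarmp q q' q'' q1 q2 q4 z3 z4
        (z1 * (1 + q * q'' * z4 + q'' * z3⁻¹ * z4 + q' * q'' * z2 * z4)) z2 =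
      Wbarpp q q' q'' q1 q2 q4 z3 z4 z1 z2 := by
  change wallFactor q q' q'' z2 z3 z4 ≠ 0 at hD'
  change Wbarmp q q' q'' q1 q2 q4 z3 z4 (z1 * wallFactor q q' q'' z2 z3 z4) z2 = _
  rw [Wbarmp_eq, Wbarpp_eq, mul_inv, ← mul_assoc q1, inv_mul_cancel_right₀ hD']

/-- the compactified wall-crossing transformation `φ̄₀₊`
(substituting `z1 ↦ z1 * D'` with `D' = 1 + q q'' z4 + q'' z3⁻¹ z4 + q' q'' z2 z4`)
pulls back `W̄₋₊` to `W̄₊₊`. -/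
theorem phibar0P_pullback (q q' q'' q1 q2 q4 z1 z2 z3 z4 : K) (hq : q ≠ 0) (hq' : q' ≠ 0) (hq'' : q'' ≠ 0)
    (hq1 : q1 ≠ 0) (hq2 : q2 ≠ 0) (hq4 : q4 ≠ 0)
    (hz1 : z1 ≠ 0) (hz2 : z2 ≠ 0) (hz3 : z3 ≠ 0) (hz4 : z4 ≠ 0)
    (hD' : 1 + q * q'' * z4 + q'' * z3⁻¹ * z4 + q' * q'' * z2 * z4 ≠ 0) :
    Wbarmp q q' q'' q1 q2 q4 z3 z4
        (z1 * (1 + q * q'' * z4 + q'' * z3⁻¹ * z4 + q' * q'' * z2 * z4)) z2 =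
      Wbarpp q q' q'' q1 q2 q4 z3 z4 z1 z2 :=
  phibar0P_pullback_general q q' q'' q1 q2 q4 z1 z2 z3 z4 hD'
end
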